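/- arXiv:2402.08482 — 4 statements merged into one kernel-verified Lean document; each statement's English description precedes it below -/
import Mathlib

section
/- Let X be a completely Hausdorff topological space and let φ : X → X be continuous. If 1 is isolated in the spectrum σ(T_φ) of the composition operator T_φ on C_b(X, ℂ), then φ is eventually periodic, i.e., there exist k ∈ ℕ and p ≥ 1 such that φ^{k+p} = φ^k. -/
open BoundedContinuousFunction Filter
open scoped ENNReal

/-- The composition (Koopman) operator `f ↦ f ∘ φ` on `C_b(X, ℂ)`. -/
noncomputable def cbKoopman {X : Type*} [TopologicalSpace X] (φ : X → X) (hφ : Continuous φ) :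
    (X →ᵇ ℂ) →L[ℂ] (X →ᵇ ℂ) :=
  LinearMap.mkContinuous
    { toFun := fun f => f.compContinuous ⟨φ, hφ⟩
      map_add' := fun f g => by ext x; simp
      map_smul' := fun c f => by ext x; simp }
    1 (fun f => by simpa using f.norm_compContinuous_le ⟨φ, hφ⟩)

/-!
If `μ` with `‖μ‖ = 1` lies in the resolvent set of `T = T_φ`, put `R = (μ - T)⁻¹`. When
`y, φ y, …, φⁿ⁻¹ y` are distinct, products of separating functions, truncated radially to the
unit ball, give `f` with `‖f‖ ≤ 1` and `f (φⁱ y) = μⁱ`. For `g = R f` the relation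
`f = μ g - g ∘ φ` makes `g (φⁱ y) / μⁱ` drop by exactly `μ⁻¹` at each step, so `n ≤ 2 ‖R‖`.
Hence every orbit enters a cycle within `N = ⌈2 ‖R‖⌉` steps, of period at most `N`, and
`φ^[N + N!] = φ^[N]`. Isolation of `1` in the spectrum provides such a `μ ≠ 1` close to `1`.
-/

open Function

section Interpolation

variable {X : Type*} [TopologicalSpace X]

lemma Set.SeparatesPoints.exists_continuous_eq_one_eq_zero
    (hX : {f : X → ℝ | Continuous f}.SeparatesPoints) {x y : X} (hxy : x ≠ y) :
    ∃ g : X → ℝ, Continuous g ∧ g x = 1 ∧ g y = 0 := by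
  obtain ⟨f, hf : Continuous f, hfxy⟩ := hX hxy
  have hne : f x - f y ≠ 0 := sub_ne_zero.mpr hfxy
  exact ⟨fun w => (f w - f y) / (f x - f y), by fun_prop, div_self hne, by simp⟩

lemma exists_continuous_bump_of_injective {ι : Type*} [Fintype ι]
    (hX : {f : X → ℝ | Continuous f}.SeparatesPoints) {z : ι → X} (hz : Injective z) (i : ι) :
    ∃ b : X → ℝ, Continuous b ∧ b (z i) = 1 ∧ ∀ j ≠ i, b (z j) = 0 := by
  have : ∀ j, ∃ g : X → ℝ, Continuous g ∧ g (z i) = 1 ∧ (j ≠ i → g (z j) = 0) := by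
    intro j
    by_cases hji : j = i
    · exact ⟨1, continuous_const, rfl, fun h => (h hji).elim⟩
    · obtain ⟨g, hg, h1, h0⟩ := hX.exists_continuous_eq_one_eq_zero (hz.ne (Ne.symm hji))
      exact ⟨g, hg, h1, fun _ => h0⟩
  choose g hg hg1 hg0 using this
  refine ⟨fun w => ∏ j, g j w, continuous_finsetProd _ fun j _ => hg j, by simp [hg1],
    fun j hji => Finset.prod_eq_zero (Finset.mem_univ j) (hg0 j hji)⟩

lemma exists_continuous_interpolation {E ι : Type*} [AddCommGroup E] [Module ℝ E]
    [TopologicalSpace E] [ContinuousAdd E] [ContinuousSMul ℝ E] [Fintype ι]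
    (hX : {f : X → ℝ | Continuous f}.SeparatesPoints) {z : ι → X} (hz : Injective z)
    (c : ι → E) : ∃ f : X → E, Continuous f ∧ ∀ i, f (z i) = c i := by
  classical
  choose b hb hb1 hb0 using exists_continuous_bump_of_injective hX hz
  refine ⟨fun w => ∑ i, b i w • c i, by fun_prop, fun k => ?_⟩
  dsimp only
  rw [Finset.sum_eq_single k (fun i _ hik => by rw [hb0 i k hik.symm, zero_smul])
    (fun hk => (hk (Finset.mem_univ k)).elim), hb1, one_smul]

lemma exists_boundedContinuous_interpolation_norm_le_one {E ι : Type*} [NormedAddCommGroup E]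
    [NormedSpace ℝ E] [Fintype ι] (hX : {f : X → ℝ | Continuous f}.SeparatesPoints)
    {z : ι → X} (hz : Injective z) {c : ι → E} (hc : ∀ i, ‖c i‖ ≤ 1) :
    ∃ f : X →ᵇ E, ‖f‖ ≤ 1 ∧ ∀ i, f (z i) = c i := by
  obtain ⟨f, hf, hfz⟩ := exists_continuous_interpolation hX hz c
  let r : E → E := fun v => (max 1 ‖v‖)⁻¹ • v
  have hr : Continuous r :=
    ((continuous_const.max continuous_norm).inv₀ fun v => by positivity).smul continuous_id
  have hr_le : ∀ v, ‖r v‖ ≤ 1 := fun v => by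
    rw [norm_smul, norm_inv, Real.norm_of_nonneg (by positivity), inv_mul_le_iff₀ (by positivity),
      mul_one]
    exact le_max_right _ _
  have hr_eq : ∀ v, ‖v‖ ≤ 1 → r v = v := fun v hv => by simp [r, max_eq_left hv]
  refine ⟨ofNormedAddCommGroup (r ∘ f) (hr.comp hf) 1 fun w => hr_le _,
    norm_ofNormedAddCommGroup_le _ zero_le_one _, fun i => ?_⟩
  change r (f (z i)) = c i
  rw [hfz, hr_eq _ (hc i)]

end Interpolation

lemma Function.iterate_add_factorial_eq_of_forall_not_injective {α : Type*} {φ : α → α} {n : ℕ}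
    (h : ∀ y, ¬ Injective fun i : Fin (n + 1) => φ^[i] y) : φ^[n + n.factorial] = φ^[n] := by
  funext y
  obtain ⟨i, j, hij, hne⟩ : ∃ i j : Fin (n + 1), φ^[i] y = φ^[j] y ∧ i ≠ j := by
    simpa [Injective] using h y
  wlog hlt : i < j generalizing i j
  · exact this j i hij.symm hne.symm (lt_of_le_of_ne (not_lt.mp hlt) hne.symm)
  have hper : IsPeriodicPt φ (j - i) (φ^[i] y) := by
    rw [IsPeriodicPt, IsFixedPt, ← iterate_add_apply, Nat.sub_add_cancel hlt.le]
    exact hij.symm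
  have hN : IsPeriodicPt φ n.factorial (φ^[n] y) := by
    have hlt' : (i : ℕ) < j := hlt
    have hdvd : (j : ℕ) - i ∣ n.factorial := Nat.dvd_factorial (by omega) (by omega)
    have := (hper.trans_dvd hdvd).apply_iterate (n - i)
    rwa [← iterate_add_apply, Nat.sub_add_cancel (by omega)] at this
  rw [add_comm, iterate_add_apply]
  exact hN

lemma Complex.exists_norm_eq_one_ne_one_norm_sub_one_lt {ε : ℝ} (hε : 0 < ε) :
    ∃ μ : ℂ, ‖μ‖ = 1 ∧ μ ≠ 1 ∧ ‖μ - 1‖ < ε := by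
  obtain ⟨θ, hθ, hθε, hθ1⟩ : ∃ θ : ℝ, 0 < θ ∧ 2 * θ < ε ∧ θ ≤ 1 :=
    ⟨min ε 1 / 4, by positivity, by linarith [min_le_left ε 1], by linarith [min_le_right ε 1]⟩
  have hnorm : ‖(θ : ℂ) * I‖ = θ := by simp [abs_of_pos hθ]
  refine ⟨exp (θ * I), norm_exp_ofReal_mul_I θ, fun h => ?_, ?_⟩
  · have him : Real.sin θ = 0 := by simpa using congrArg im h
    exact (Real.sin_pos_of_pos_of_lt_pi hθ (by linarith [Real.pi_gt_three])).ne' him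
  · calc ‖exp (θ * I) - 1‖ ≤ 2 * ‖(θ : ℂ) * I‖ := norm_exp_sub_one_le (by rwa [hnorm])
      _ < ε := by rwa [hnorm]

section Koopman

variable {X : Type*} [TopologicalSpace X] {φ : X → X} {hφ : Continuous φ}

lemma algebraMap_sub_cbKoopman_apply (μ : ℂ) (g : X →ᵇ ℂ) (w : X) :
    (algebraMap ℂ _ μ - cbKoopman φ hφ) g w = μ * g w - g (φ w) :=
  rfl

lemma mul_resolvent_cbKoopman_apply_sub {μ : ℂ}
    (hμ : μ ∈ resolventSet ℂ (cbKoopman φ hφ)) (f : X →ᵇ ℂ) (w : X) :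
    μ * resolvent (cbKoopman φ hφ) μ f w - resolvent (cbKoopman φ hφ) μ f (φ w) = f w := by
  rw [← algebraMap_sub_cbKoopman_apply (hφ := hφ), ← mul_apply_eq_comp, resolvent,
    Ring.mul_inverse_cancel _ (spectrum.mem_resolventSet_iff.mp hμ), one_apply_eq_self]

lemma le_two_mul_norm_resolvent_of_injective_orbit
    (hX : {f : X → ℝ | Continuous f}.SeparatesPoints) {μ : ℂ} (hμ : ‖μ‖ = 1)
    (hres : μ ∈ resolventSet ℂ (cbKoopman φ hφ)) {y : X} {n : ℕ}
    (hinj : Injective fun i : Fin n => φ^[i] y) :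
    (n : ℝ) ≤ 2 * ‖resolvent (cbKoopman φ hφ) μ‖ := by
  set R := resolvent (cbKoopman φ hφ) μ
  obtain ⟨f, hf, hfy⟩ := exists_boundedContinuous_interpolation_norm_le_one hX hinj
    (c := fun i => μ ^ (i : ℕ)) (by simp [hμ])
  have hμ0 : μ ≠ 0 := norm_ne_zero_iff.mp (by rw [hμ]; exact one_ne_zero)
  set b : ℕ → ℂ := fun i => R f (φ^[i] y) / μ ^ i
  have hb_step : ∀ i < n, b i - b (i + 1) = μ⁻¹ := by
    intro i hi
    have h := mul_resolvent_cbKoopman_apply_sub hres f (φ^[i] y)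
    rw [← iterate_succ_apply' φ i y, hfy ⟨i, hi⟩] at h
    simp only [b, pow_succ]
    field_simp
    linear_combination h
  have hb_le : ∀ i, ‖b i‖ ≤ ‖R‖ := fun i => by
    rw [norm_div, norm_pow, hμ, one_pow, div_one]
    calc ‖R f (φ^[i] y)‖ ≤ ‖R f‖ := norm_coe_le_norm _ _
      _ ≤ ‖R‖ * ‖f‖ := R.le_opNorm f
      _ ≤ ‖R‖ := mul_le_of_le_one_right (norm_nonneg _) hf
  have htel : (n : ℂ) * μ⁻¹ = b 0 - b n :=
    calc (n : ℂ) * μ⁻¹ = ∑ i ∈ Finset.range n, μ⁻¹ := by simp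
      _ = ∑ i ∈ Finset.range n, (b i - b (i + 1)) :=
        Finset.sum_congr rfl fun i hi => (hb_step i (Finset.mem_range.mp hi)).symm
      _ = b 0 - b n := Finset.sum_range_sub' b n
  calc (n : ℝ) = ‖(n : ℂ) * μ⁻¹‖ := by simp [hμ]
    _ = ‖b 0 - b n‖ := by rw [htel]
    _ ≤ ‖b 0‖ + ‖b n‖ := norm_sub_le _ _
    _ ≤ 2 * ‖R‖ := by linarith [hb_le 0, hb_le n]

theorem exists_iterate_add_eq_of_mem_resolventSet
    (hX : {f : X → ℝ | Continuous f}.SeparatesPoints) {μ : ℂ} (hμ : ‖μ‖ = 1)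
    (hres : μ ∈ resolventSet ℂ (cbKoopman φ hφ)) :
    ∃ k : ℕ, ∃ p ≥ 1, φ^[k + p] = φ^[k] := by
  set N := ⌈2 * ‖resolvent (cbKoopman φ hφ) μ‖⌉₊
  refine ⟨N, N.factorial, N.factorial_pos,
    iterate_add_factorial_eq_of_forall_not_injective fun y hinj => ?_⟩
  have hle := le_two_mul_norm_resolvent_of_injective_orbit hX hμ hres hinj
  have hceil := Nat.le_ceil (2 * ‖resolvent (cbKoopman φ hφ) μ‖)
  push_cast at hle
  linarith

end Koopman

theorem eventually_periodic_of_one_isolated_in_spectrum_general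
    {X : Type*} [TopologicalSpace X]
    (hX : ∀ x y : X, x ≠ y →
      ∃ f : X → ℝ, Continuous f ∧ (∀ z, f z ∈ Set.Icc (0 : ℝ) 1) ∧ f x = 1 ∧ f y = 0)
    (φ : X → X) (hφ : Continuous φ)
    (hiso : ∃ ε > 0, ∀ z ∈ spectrum ℂ (cbKoopman φ hφ), z ≠ 1 → ε ≤ ‖z - 1‖) :
    ∃ k : ℕ, ∃ p ≥ 1, φ^[k + p] = φ^[k] := by
  obtain ⟨ε, hε, hiso⟩ := hiso
  obtain ⟨μ, hμ, hμ1, hμε⟩ := Complex.exists_norm_eq_one_ne_one_norm_sub_one_lt hε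
  have hres : μ ∈ resolventSet ℂ (cbKoopman φ hφ) := Set.notMem_compl_iff.mp fun hspec =>
    (hiso μ hspec hμ1).not_gt hμε
  have hsep : {f : X → ℝ | Continuous f}.SeparatesPoints := fun x y hxy =>
    let ⟨f, hf, _, hfx, hfy⟩ := hX x y hxy
    ⟨f, hf, by rw [hfx, hfy]; exact one_ne_zero⟩
  exact exists_iterate_add_eq_of_mem_resolventSet hsep hμ hres

/-- If `X` is completely Hausdorff, `φ : X → X` is continuous and `1` is isolated in the
spectrum of the composition operator `T_φ` on `C_b(X, ℂ)`, then `φ` is eventually periodic. -/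
theorem eventually_periodic_of_one_isolated_in_spectrum
    {X : Type*} [TopologicalSpace X]
    (hX : ∀ x y : X, x ≠ y →
      ∃ f : X → ℝ, Continuous f ∧ (∀ z, f z ∈ Set.Icc (0 : ℝ) 1) ∧ f x = 1 ∧ f y = 0)
    (φ : X → X) (hφ : Continuous φ)
    (h1 : (1 : ℂ) ∈ spectrum ℂ (cbKoopman φ hφ))
    (hiso : ∃ ε > 0, ∀ z ∈ spectrum ℂ (cbKoopman φ hφ), z ≠ 1 → ε ≤ ‖z - 1‖) :
    ∃ k : ℕ, ∃ p ≥ 1, φ^[k + p] = φ^[k] :=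
  eventually_periodic_of_one_isolated_in_spectrum_general hX φ hφ hiso
end

section
/- Let X be a completely Hausdorff topological space and let φ : X → X be continuous. Then the composition operator T_φ on C_b(X, ℂ) is uniformly mean ergodic if and only if φ is eventually periodic, i.e., there exist k ∈ ℕ and p ≥ 1 such that φ^{k+p} = φ^k. -/
/-!
If `φ^[k + p] = φ^[k]`, the powers of `T_φ` form an eventually periodic sequence, and the Cesàro
averages of any eventually periodic sequence converge, at rate `O(1/n)`, to the mean over one
period. Conversely, if `φ` is not eventually periodic, then for every `m` some orbit has `m`
distinct initial points, since otherwise `φ^[m + m!] = φ^[m]`. Given `2n` such points, complete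
Hausdorffness yields a continuous `f : X → [0, 1]` equal to `1` on the first `n` and to `0` on the
last `n`; then `(A_n f - A_{2n} f)(x) = 1/2`, so the averages are not Cauchy in operator norm.
-/

open BoundedContinuousFunction Filter
open scoped ENNReal

/-- A bounded operator is uniformly mean ergodic if its Cesàro averages converge in
operator norm. -/
def UniformlyMeanErgodic {E : Type*} [NormedAddCommGroup E] [NormedSpace ℂ E]
    (T : E →L[ℂ] E) : Prop :=
  ∃ P : E →L[ℂ] E,
    Tendsto (fun n : ℕ => ‖(n : ℂ)⁻¹ • (∑ k ∈ Finset.range n, T ^ k) - P‖) atTop (nhds 0)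

open Finset Topology

section EventuallyPeriodic

variable {k p : ℕ}

theorem finite_range_of_eventually_periodic {α : Type*} {a : ℕ → α} (hp : 0 < p)
    (h : ∀ n ≥ k, a (n + p) = a n) : (Set.range a).Finite := by
  refine ((Set.finite_Iio (k + p)).image a).subset ?_
  rintro _ ⟨n, rfl⟩
  induction n using Nat.strong_induction_on with
  | _ n ih =>
    by_cases hn : n < k + p
    · exact ⟨n, hn, rfl⟩
    · obtain ⟨m, hm, hma⟩ := ih (n - p) (by omega)
      refine ⟨m, hm, ?_⟩
      rw [hma, ← h (n - p) (by omega), Nat.sub_add_cancel (by omega)]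

theorem sum_range_add_eq_of_eventually_periodic {E : Type*} [AddCommGroup E] {a : ℕ → E}
    (h : ∀ n ≥ k, a (n + p) = a n) {n : ℕ} (hn : k ≤ n) :
    ∑ i ∈ range p, a (n + i) = ∑ i ∈ range p, a (k + i) := by
  induction n, hn using Nat.le_induction with
  | base => rfl
  | succ n hn ih =>
    have key := (sum_range_succ' (fun i => a (n + i)) p).symm.trans
      (sum_range_succ (fun i => a (n + i)) p)
    rw [h n hn, add_zero] at key
    rw [← ih, ← add_right_cancel key]
    exact sum_congr rfl fun i _ => congrArg a (by omega)

end EventuallyPeriodic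

theorem tendsto_cesaro_of_eventually_periodic {𝕜 E : Type*} [RCLike 𝕜] [NormedAddCommGroup E]
    [NormedSpace 𝕜 E] {a : ℕ → E} {k p : ℕ} (hp : 0 < p) (h : ∀ n ≥ k, a (n + p) = a n) :
    Tendsto (fun n : ℕ => (n : 𝕜)⁻¹ • ∑ j ∈ range n, a j) atTop
      (𝓝 ((p : 𝕜)⁻¹ • ∑ j ∈ range p, a (k + j))) := by
  set Q := ∑ j ∈ range p, a (k + j)
  have hp' : (p : 𝕜) ≠ 0 := Nat.cast_ne_zero.2 hp.ne'
  -- the partial sums grow by `Q` over each period, so `c` is eventually periodic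
  set c : ℕ → E := fun n => ∑ j ∈ range n, a j - ((n : 𝕜) / p) • Q
  have hc : ∀ n ≥ k, c (n + p) = c n := fun n hn => by
    simp only [c, sum_range_add, sum_range_add_eq_of_eventually_periodic h hn, Nat.cast_add,
      add_div, div_self hp', add_smul, one_smul]
    abel
  have hbdd : IsBoundedUnder (· ≤ ·) atTop (norm ∘ c) := by
    obtain ⟨C, hC⟩ := (finite_range_of_eventually_periodic hp hc).isBounded.exists_norm_le
    exact isBoundedUnder_of ⟨C, fun n => hC _ ⟨n, rfl⟩⟩
  have hdecomp : ∀ᶠ n : ℕ in atTop,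
      (n : 𝕜)⁻¹ • c n + (p : 𝕜)⁻¹ • Q = (n : 𝕜)⁻¹ • ∑ j ∈ range n, a j := by
    filter_upwards [eventually_ne_atTop 0] with n hn
    have hn' : (n : 𝕜) ≠ 0 := Nat.cast_ne_zero.2 hn
    simp only [c, smul_sub, smul_smul, inv_mul_cancel_left₀ hn', div_eq_mul_inv, sub_add_cancel]
  simpa using (tendsto_inv_atTop_nhds_zero_nat.zero_smul_isBoundedUnder_le hbdd).add_const
    ((p : 𝕜)⁻¹ • Q) |>.congr' hdecomp

section Cesaro

variable {E : Type*} [NormedAddCommGroup E] [NormedSpace ℂ E]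

noncomputable def cesaroAvg (T : E →L[ℂ] E) (n : ℕ) : E →L[ℂ] E :=
  (n : ℂ)⁻¹ • ∑ k ∈ range n, T ^ k

theorem uniformlyMeanErgodic_iff_exists_tendsto (T : E →L[ℂ] E) :
    UniformlyMeanErgodic T ↔ ∃ P, Tendsto (cesaroAvg T) atTop (𝓝 P) := by
  simp only [UniformlyMeanErgodic, ← tendsto_iff_norm_sub_tendsto_zero]
  rfl

theorem uniformlyMeanErgodic_of_pow_add_eq_pow (T : E →L[ℂ] E) {k p : ℕ} (hp : 0 < p)
    (h : T ^ (k + p) = T ^ k) : UniformlyMeanErgodic T := by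
  refine (uniformlyMeanErgodic_iff_exists_tendsto T).2
    ⟨_, tendsto_cesaro_of_eventually_periodic (𝕜 := ℂ) (k := k) hp fun n (hn : k ≤ n) => ?_⟩
  obtain ⟨m, rfl⟩ := Nat.exists_eq_add_of_le hn
  rw [add_right_comm, pow_add, h, ← pow_add]

end Cesaro

section Orbits

variable {X : Type*} {φ : X → X}

theorem iterate_add_factorial_apply_eq {x : X} {a b m : ℕ} (hab : a < b) (hbm : b ≤ m)
    (h : φ^[a] x = φ^[b] x) : φ^[m + m.factorial] x = φ^[m] x := by
  have hper : Function.IsPeriodicPt φ (b - a) (φ^[a] x) := by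
    rw [Function.IsPeriodicPt, Function.IsFixedPt, ← Function.iterate_add_apply,
      Nat.sub_add_cancel hab.le, h]
  have hfact := (hper.trans_dvd (Nat.dvd_factorial (by omega) (by omega : b - a ≤ m))).eq
  rw [← Function.iterate_add_apply] at hfact
  calc φ^[m + m.factorial] x = φ^[m - a] (φ^[m.factorial + a] x) := by
        rw [← Function.iterate_add_apply]; congr 1; omega
    _ = φ^[m] x := by rw [hfact, ← Function.iterate_add_apply, Nat.sub_add_cancel (by omega)]

theorem exists_injOn_iterate_of_not_eventually_periodic
    (h : ¬∃ k : ℕ, ∃ p ≥ 1, φ^[k + p] = φ^[k]) (m : ℕ) :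
    ∃ x, Set.InjOn (fun j => φ^[j] x) (Set.Iio m) := by
  by_contra! hinj
  refine h ⟨m, m.factorial, m.factorial_pos, funext fun x => ?_⟩
  obtain ⟨a, ha, b, hb, hab, hne⟩ : ∃ a < m, ∃ b < m, φ^[a] x = φ^[b] x ∧ a ≠ b := by
    simpa [Set.InjOn] using hinj x
  rcases lt_or_gt_of_ne hne with hlt | hlt
  · exact iterate_add_factorial_apply_eq hlt hb.le hab
  · exact iterate_add_factorial_apply_eq hlt ha.le hab.symm

end Orbits

theorem exists_continuous_zero_one_of_finset {X : Type*} [TopologicalSpace X]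
    (hX : ∀ x y : X, x ≠ y →
      ∃ f : X → ℝ, Continuous f ∧ (∀ z, f z ∈ Set.Icc (0 : ℝ) 1) ∧ f x = 1 ∧ f y = 0)
    {s t : Finset X} (hst : Disjoint s t) :
    ∃ f : C(X, ℝ), Set.EqOn f 0 s ∧ Set.EqOn f 1 t ∧ ∀ x, f x ∈ Set.Icc (0 : ℝ) 1 := by
  choose! g hgc hg01 hg1 hg0 using hX
  have hne : ∀ x ∈ t, ∀ y ∈ s, x ≠ y := fun x hx y hy hxy =>
    disjoint_left.1 hst hy (hxy ▸ hx)
  have hterm_nonneg : ∀ z, 0 ≤ ∑ x ∈ t, ∏ y ∈ s, g x y z := fun z =>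
    sum_nonneg fun x hx => prod_nonneg fun y hy => (hg01 x y (hne x hx y hy) z).1
  refine ⟨⟨fun z => min (∑ x ∈ t, ∏ y ∈ s, g x y z) 1, ?_⟩, fun y hy => ?_, fun x hx => ?_,
    fun z => ⟨le_min (hterm_nonneg z) zero_le_one, min_le_right _ _⟩⟩
  · exact (continuous_finsetSum _ fun x hx => continuous_finsetProd _ fun y hy =>
      hgc x y (hne x hx y hy)).min continuous_const
  · have : ∑ x ∈ t, ∏ y' ∈ s, g x y' y = 0 := sum_eq_zero fun x hx =>
      prod_eq_zero hy (hg0 x y (hne x hx y hy))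
    simp [this]
  · have : 1 ≤ ∑ x' ∈ t, ∏ y ∈ s, g x' y x := by
      calc (1 : ℝ) = ∏ y ∈ s, g x y x := (prod_eq_one fun y hy => hg1 x y (hne x hx y hy)).symm
        _ ≤ _ := single_le_sum (f := fun x' => ∏ y ∈ s, g x' y x)
          (fun x' hx' => prod_nonneg fun y hy => (hg01 x' y (hne x' hx' y hy) x).1) hx
    simp [this]

section Koopman

variable {X : Type*} [TopologicalSpace X] (φ : X → X) (hφ : Continuous φ)

theorem cbKoopman_pow_apply (m : ℕ) (f : X →ᵇ ℂ) (x : X) :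
    (cbKoopman φ hφ ^ m) f x = f (φ^[m] x) := by
  induction m generalizing f with
  | zero => rfl
  | succ m ih => rw [pow_succ, mul_apply_eq_comp, ih, Function.iterate_succ_apply']; rfl

theorem cesaroAvg_cbKoopman_apply (n : ℕ) (f : X →ᵇ ℂ) (x : X) :
    cesaroAvg (cbKoopman φ hφ) n f x = (n : ℂ)⁻¹ * ∑ j ∈ range n, f (φ^[j] x) := by
  simp only [cesaroAvg, _root_.smul_apply, _root_.sum_apply, BoundedContinuousFunction.smul_apply,
    BoundedContinuousFunction.sum_apply, cbKoopman_pow_apply, smul_eq_mul]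

end Koopman

theorem half_le_norm_cesaroAvg_cbKoopman_sub {X : Type*} [TopologicalSpace X]
    (hX : ∀ x y : X, x ≠ y →
      ∃ f : X → ℝ, Continuous f ∧ (∀ z, f z ∈ Set.Icc (0 : ℝ) 1) ∧ f x = 1 ∧ f y = 0)
    {φ : X → X} (hφ : Continuous φ) {n : ℕ} (hn : 0 < n) {x : X}
    (hx : Set.InjOn (fun j => φ^[j] x) (Set.Iio (2 * n))) :
    1 / 2 ≤ ‖cesaroAvg (cbKoopman φ hφ) n - cesaroAvg (cbKoopman φ hφ) (2 * n)‖ := by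
  classical
  have hdisj : Disjoint ((Ico n (2 * n)).image (φ^[·] x)) ((range n).image (φ^[·] x)) := by
    refine disjoint_left.2 ?_
    simp only [mem_image, mem_Ico, mem_range, not_exists, not_and]
    rintro _ ⟨i, ⟨hni, hi⟩, rfl⟩ j hj hji
    exact (hj.trans_le hni).ne (hx (Set.mem_Iio.2 (by omega)) (Set.mem_Iio.2 hi) hji)
  obtain ⟨u, hu0, hu1, hu01⟩ := exists_continuous_zero_one_of_finset hX hdisj
  let f : X →ᵇ ℂ := ofNormedAddCommGroup (fun z => (u z : ℂ)) (by fun_prop) 1 fun z => by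
    simpa [abs_le] using ⟨(hu01 z).1.trans' (by norm_num), (hu01 z).2⟩
  have hf : ‖f‖ ≤ 1 := norm_ofNormedAddCommGroup_le _ zero_le_one _
  have hfirst : ∀ j ∈ range n, f (φ^[j] x) = 1 := fun j hj => by
    simp [f, hu1 (mem_image_of_mem _ hj)]
  have hsecond : ∀ j ∈ range n, f (φ^[n + j] x) = 0 := fun j hj => by
    have hnj : n + j ∈ Ico n (2 * n) := by rw [mem_Ico]; rw [mem_range] at hj; omega
    simp [f, hu0 (mem_image_of_mem (φ^[·] x) hnj)]
  have hnC : (n : ℂ) ≠ 0 := Nat.cast_ne_zero.2 hn.ne'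
  have hA : cesaroAvg (cbKoopman φ hφ) n f x = 1 := by
    rw [cesaroAvg_cbKoopman_apply, sum_congr rfl hfirst]
    simp [hnC]
  have hA2 : cesaroAvg (cbKoopman φ hφ) (2 * n) f x = 1 / 2 := by
    rw [cesaroAvg_cbKoopman_apply, two_mul, sum_range_add, sum_congr rfl hfirst,
      sum_congr rfl hsecond]
    simp only [sum_const, card_range, nsmul_eq_mul, mul_one, Nat.cast_add]
    field_simp
    ring
  calc (1 : ℝ) / 2
      = ‖(cesaroAvg (cbKoopman φ hφ) n - cesaroAvg (cbKoopman φ hφ) (2 * n)) f x‖ := by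
        rw [_root_.sub_apply, BoundedContinuousFunction.sub_apply, hA, hA2]
        norm_num
    _ ≤ ‖(cesaroAvg (cbKoopman φ hφ) n - cesaroAvg (cbKoopman φ hφ) (2 * n)) f‖ :=
        norm_coe_le_norm _ x
    _ ≤ ‖cesaroAvg (cbKoopman φ hφ) n - cesaroAvg (cbKoopman φ hφ) (2 * n)‖ :=
        ContinuousLinearMap.le_of_opNorm_le_of_le _ le_rfl hf |>.trans_eq (mul_one _)

/-- For a completely Hausdorff space `X` and continuous `φ : X → X`, the composition operator
`T_φ` on `C_b(X, ℂ)` is uniformly mean ergodic iff `φ` is eventually periodic. -/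
theorem uniformlyMeanErgodic_iff_eventually_periodic
    {X : Type*} [TopologicalSpace X]
    (hX : ∀ x y : X, x ≠ y →
      ∃ f : X → ℝ, Continuous f ∧ (∀ z, f z ∈ Set.Icc (0 : ℝ) 1) ∧ f x = 1 ∧ f y = 0)
    (φ : X → X) (hφ : Continuous φ) :
    UniformlyMeanErgodic (cbKoopman φ hφ) ↔ ∃ k : ℕ, ∃ p ≥ 1, φ^[k + p] = φ^[k] := by
  constructor
  · intro hume
    by_contra hper
    obtain ⟨P, hP⟩ := (uniformlyMeanErgodic_iff_exists_tendsto _).1 hume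
    have hgap : Tendsto (fun n => cesaroAvg (cbKoopman φ hφ) n -
        cesaroAvg (cbKoopman φ hφ) (2 * n)) atTop (𝓝 0) := by
      simpa using hP.sub (hP.comp (tendsto_id.const_mul_atTop' two_pos))
    obtain ⟨n, hn_gap, hn⟩ :=
      ((hgap.norm.eventually (gt_mem_nhds (norm_zero.trans_lt one_half_pos))).and
        (eventually_gt_atTop 0)).exists
    obtain ⟨x, hx⟩ := exists_injOn_iterate_of_not_eventually_periodic hper (2 * n)
    exact (half_le_norm_cesaroAvg_cbKoopman_sub hX hφ hn hx).not_gt (by simpa using hn_gap)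
  · rintro ⟨k, p, hp, hper⟩
    have hpow : cbKoopman φ hφ ^ (k + p) = cbKoopman φ hφ ^ k := by
      ext f x
      rw [cbKoopman_pow_apply, cbKoopman_pow_apply, hper]
    exact uniformlyMeanErgodic_of_pow_add_eq_pow _ hp hpow
end

section
/- Let K be a compact Hausdorff space, let φ : K → K be continuous, and let M ⊆ K be a closed subset with φ(M) ⊆ M. If the quantities c_n := sup { ‖f ∘ φ^n‖_∞ : f ∈ C(K, ℝ), ‖f‖_∞ ≤ 1, f = 0 on M } converge to 0 as n → ∞, then there exists n₀ ∈ ℕ such that φ^{n₀}(K) ⊆ M (equivalently, f ∘ φ^{n₀} = 0 for every continuous f : K → ℝ vanishing on M). -/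
open Filter

/-!
Whenever `φ^[n] x ∉ M` for some `x`, an Urysohn function `f` with `‖f‖ ≤ 1`, `f = 0` on the
closed set `M` and `f (φ^[n] x) = 1` witnesses `c_n ≥ 1`. Since `c_n < 1` for large `n`, such an
`n` maps all of `K` into `M`.
-/

namespace ContinuousMap

theorem norm_comp_le {K L E : Type*} [TopologicalSpace K] [CompactSpace K]
    [TopologicalSpace L] [CompactSpace L] [NormedAddCommGroup E] (f : C(L, E)) (g : C(K, L)) :
    ‖f.comp g‖ ≤ ‖f‖ :=
  (norm_le _ (norm_nonneg f)).2 fun x => f.norm_coe_le_norm (g x)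

theorem exists_norm_le_one_eqOn_zero_apply_eq_one {K : Type*} [TopologicalSpace K]
    [CompactSpace K] [T2Space K] {M : Set K} (hM : IsClosed M) {y : K} (hy : y ∉ M) :
    ∃ f : C(K, ℝ), ‖f‖ ≤ 1 ∧ (∀ x ∈ M, f x = 0) ∧ f y = 1 := by
  obtain ⟨f, hf0, hf1, hf01⟩ := exists_continuous_zero_one_of_isClosed hM isClosed_singleton
    (Set.disjoint_singleton_right.2 hy)
  refine ⟨f, (norm_le _ zero_le_one).2 fun x => ?_, fun x hx => hf0 hx, hf1 rfl⟩
  rw [Real.norm_eq_abs, abs_le]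
  exact ⟨by linarith [(hf01 x).1], (hf01 x).2⟩

theorem one_le_sSup_norm_comp_of_apply_notMem {K : Type*} [TopologicalSpace K] [CompactSpace K]
    [T2Space K] {M : Set K} (hM : IsClosed M) (g : C(K, K)) {x : K} (hx : g x ∉ M) :
    1 ≤ sSup {r : ℝ | ∃ f : C(K, ℝ), ‖f‖ ≤ 1 ∧ (∀ x ∈ M, f x = 0) ∧ r = ‖f.comp g‖} := by
  obtain ⟨f, hf_norm, hf_zero, hf_one⟩ := exists_norm_le_one_eqOn_zero_apply_eq_one hM hx
  have hbdd : BddAbove {r : ℝ | ∃ f : C(K, ℝ), ‖f‖ ≤ 1 ∧ (∀ x ∈ M, f x = 0) ∧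
      r = ‖f.comp g‖} := by
    refine ⟨1, ?_⟩
    rintro r ⟨h, hh_norm, -, rfl⟩
    exact (norm_comp_le h g).trans hh_norm
  calc (1 : ℝ) = ‖(f.comp g) x‖ := by simp [hf_one]
    _ ≤ ‖f.comp g‖ := (f.comp g).norm_coe_le_norm x
    _ ≤ _ := le_csSup hbdd ⟨f, hf_norm, hf_zero, rfl⟩

end ContinuousMap

theorem iterate_maps_into_of_restricted_norms_tendsto_zero_general
    {K : Type*} [TopologicalSpace K] [CompactSpace K] [T2Space K]
    (φ : K → K) (hφ : Continuous φ) (M : Set K) (hM : IsClosed M)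
    (hc : Tendsto
      (fun n : ℕ => sSup {r : ℝ | ∃ f : C(K, ℝ), ‖f‖ ≤ 1 ∧ (∀ x ∈ M, f x = 0) ∧
        r = ‖f.comp ⟨φ^[n], hφ.iterate n⟩‖})
      atTop (nhds 0)) :
    ∃ n₀ : ℕ, ∀ x : K, φ^[n₀] x ∈ M := by
  obtain ⟨n, hn⟩ := (hc.eventually (eventually_lt_nhds zero_lt_one)).exists
  refine ⟨n, fun x => ?_⟩
  by_contra hx
  exact (ContinuousMap.one_le_sSup_norm_comp_of_apply_notMem hM ⟨φ^[n], hφ.iterate n⟩ hx).not_gt hn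

/-- If `K` is compact Hausdorff, `φ : K → K` is continuous, `M ⊆ K` is closed with
`φ(M) ⊆ M`, and the norms `c_n` of the powers of the composition operator restricted to the
ideal of functions vanishing on `M` tend to `0`, then some iterate of `φ` maps `K` into
`M`. -/
theorem iterate_maps_into_of_restricted_norms_tendsto_zero
    {K : Type*} [TopologicalSpace K] [CompactSpace K] [T2Space K]
    (φ : K → K) (hφ : Continuous φ) (M : Set K) (hM : IsClosed M)
    (hinv : Set.MapsTo φ M M)
    (hc : Tendsto
      (fun n : ℕ => sSup {r : ℝ | ∃ f : C(K, ℝ), ‖f‖ ≤ 1 ∧ (∀ x ∈ M, f x = 0) ∧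
        r = ‖f.comp ⟨φ^[n], hφ.iterate n⟩‖})
      atTop (nhds 0)) :
    ∃ n₀ : ℕ, ∀ x : K, φ^[n₀] x ∈ M :=
  iterate_maps_into_of_restricted_norms_tendsto_zero_general φ hφ M hM hc
end

section
/- Let X be any topological space, let φ : X → X be continuous, and let T_φ be the composition operator on C_b(X, ℂ). If the peripheral spectrum σ(T_φ) ∩ 𝕋 is a proper subset of the unit circle 𝕋, then σ(T_φ) ∩ 𝕋 is a finite set and every λ ∈ σ(T_φ) ∩ 𝕋 is a root of unity, i.e., λ^n = 1 for some n ≥ 1. -/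
/-!
Write `S = σ(T_φ) ∩ 𝕋`. Since `‖T_φ‖ ≤ 1`, every `c ∈ S` lies on the boundary of the spectrum,
hence is an approximate eigenvalue: `‖T_φ f - c f‖ < ε ‖f‖` for some `f`. As `T_φ` is
multiplicative and the sup norm satisfies `‖f ^ n‖ = ‖f‖ ^ n`, the powers `f ^ n` are approximate
eigenvectors for `c ^ n`, so `S` is closed under positive powers.

A closed subset of `𝕋` closed under positive powers which contains points `exp (α i)` with
arbitrarily small `α ≠ 0` is all of `𝕋`, since the powers of such a point form an `|α|`-net.
A point of `S` that is not a root of unity has such powers by Dirichlet's approximation theorem,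
and if `S` were infinite it would contain roots of unity `z` of arbitrarily large order `m`, whose
powers include `exp (2π i / m)`.
-/

open BoundedContinuousFunction Filter
open scoped ENNReal

namespace spectrum

theorem norm_resolvent_inv_le {𝕜 A : Type*} [NontriviallyNormedField 𝕜] [NormedRing A]
    [NormedAlgebra 𝕜 A] [CompleteSpace A] {a : A} {c d : 𝕜} (hc : c ∈ spectrum 𝕜 a)
    (hd : d ∈ resolventSet 𝕜 a) : ‖resolvent a d‖⁻¹ ≤ ‖c - d‖ * ‖(1 : A)‖ := by
  obtain ⟨u, hu⟩ := mem_resolventSet_iff.mp hd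
  have hR : resolvent a d = ↑u⁻¹ := by rw [resolvent, ← hu, Ring.inverse_unit]
  by_contra! hlt
  refine hc (u.ofNearby (algebraMap 𝕜 A c - a) ?_).isUnit
  rw [hu, sub_sub_sub_cancel_right, ← map_sub, norm_algebraMap, ← hR]
  exact hlt

theorem mem_frontier_of_norm_mul_le {𝕜 A : Type*} [RCLike 𝕜] [NormedRing A]
    [NormedAlgebra 𝕜 A] [CompleteSpace A] {a : A} {c : 𝕜} (hc : c ∈ spectrum 𝕜 a) (hc0 : c ≠ 0)
    (h : ‖a‖ * ‖(1 : A)‖ ≤ ‖c‖) : c ∈ frontier (spectrum 𝕜 a) := by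
  rw [frontier_eq_closure_inter_closure]
  refine ⟨subset_closure hc, Metric.mem_closure_iff.mpr fun ε hε ↦ ?_⟩
  have hc0' : 0 < ‖c‖ := norm_pos_iff.mpr hc0
  set t : ℝ := ε / (2 * ‖c‖)
  have ht : 0 < t := by positivity
  refine ⟨((1 + t : ℝ) : 𝕜) * c, fun hmem ↦ ?_, ?_⟩
  · have := (norm_le_norm_mul_of_mem hmem).trans h
    rw [norm_mul, RCLike.norm_ofReal, abs_of_pos (by positivity)] at this
    nlinarith
  · rw [dist_eq_norm, show c - ((1 + t : ℝ) : 𝕜) * c = -((t : 𝕜) * c) by push_cast; ring,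
      norm_neg, norm_mul, RCLike.norm_ofReal, abs_of_pos ht]
    simp only [t]
    field_simp
    linarith

end spectrum


namespace ContinuousLinearMap

variable {𝕜 E : Type*} [NontriviallyNormedField 𝕜] [NormedAddCommGroup E] [NormedSpace 𝕜 E]

/-- Homogeneous form of `‖f‖ = 1 ∧ ‖T f - c • f‖ < ε`: over a general normed field unit vectors
need not exist. -/
def IsApproxEigenvalue (T : E →L[𝕜] E) (c : 𝕜) : Prop :=
  ∀ ε > 0, ∃ f : E, ‖T f - c • f‖ < ε * ‖f‖

theorem IsApproxEigenvalue.mem_spectrum {T : E →L[𝕜] E} {c : 𝕜} (h : T.IsApproxEigenvalue c) :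
    c ∈ spectrum 𝕜 T := by
  rintro ⟨u, hu⟩
  set C := ‖(↑u⁻¹ : E →L[𝕜] E)‖
  obtain ⟨f, hf⟩ := h (C + 1)⁻¹ (by positivity)
  have hf0 : 0 < ‖f‖ := pos_of_mul_pos_right ((norm_nonneg _).trans_lt hf) (by positivity)
  have hle : ‖f‖ ≤ C * ‖T f - c • f‖ := calc
    ‖f‖ = ‖(↑u⁻¹ : E →L[𝕜] E) ((u : E →L[𝕜] E) f)‖ := by
      rw [← mul_apply_eq_comp, u.inv_mul, one_apply_eq_self]
    _ ≤ C * ‖(u : E →L[𝕜] E) f‖ := le_opNorm _ _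
    _ = C * ‖T f - c • f‖ := by rw [hu, _root_.sub_apply, algebraMap_apply, norm_sub_rev]
  have hlt : C * ‖T f - c • f‖ < ‖f‖ := calc
    C * ‖T f - c • f‖ ≤ C * ((C + 1)⁻¹ * ‖f‖) := by gcongr
    _ < ‖f‖ := by
      rw [← mul_assoc]
      refine mul_lt_of_lt_one_left hf0 ?_
      rw [mul_inv_lt_iff₀ (by positivity)]
      linarith
  exact hlt.not_ge hle

theorem exists_norm_apply_sub_smul_lt {𝕜 E : Type*} [DenselyNormedField 𝕜] [NormedAddCommGroup E]
    [NormedSpace 𝕜 E] [CompleteSpace E] {T : E →L[𝕜] E} {c d : 𝕜} (hc : c ∈ spectrum 𝕜 T)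
    (hd : d ∈ resolventSet 𝕜 T) : ∃ f : E, ‖T f - c • f‖ < 3 * ‖c - d‖ * ‖f‖ := by
  -- `‖R(d)‖ ≥ ‖c - d‖⁻¹`, and `f = R(d) g` for a `g` nearly attaining `‖R(d)‖` does the job.
  have : Nontrivial (E →L[𝕜] E) := by
    by_contra h
    rw [not_nontrivial_iff_subsingleton] at h
    simp [spectrum.of_subsingleton] at hc
  obtain ⟨u, hu⟩ := spectrum.mem_resolventSet_iff.mp hd
  set R : E →L[𝕜] E := ↑u⁻¹
  have hRpos : 0 < ‖R‖ := Units.norm_pos u⁻¹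
  have hRinv : ‖R‖⁻¹ ≤ ‖c - d‖ := by
    have h1 : ‖(1 : E →L[𝕜] E)‖ ≤ 1 := norm_id_le
    have h2 := spectrum.norm_resolvent_inv_le hc hd
    rw [resolvent, ← hu, Ring.inverse_unit] at h2
    exact h2.trans (mul_le_of_le_one_right (norm_nonneg _) h1)
  obtain ⟨g, hg, hRg⟩ := exists_lt_apply_of_lt_opNorm R (half_lt_self hRpos)
  refine ⟨R g, ?_⟩
  have hdf : T (R g) - d • R g = -g := by
    rw [← neg_sub, ← algebraMap_apply (R := 𝕜), ← _root_.sub_apply, ← hu, ← mul_apply_eq_comp,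
      u.mul_inv, one_apply_eq_self]
  have hg' : ‖g‖ < 2 * ‖c - d‖ * ‖R g‖ := calc
    ‖g‖ < 1 := hg
    _ = 2 * ‖R‖⁻¹ * (‖R‖ / 2) := by field_simp
    _ ≤ 2 * ‖c - d‖ * ‖R g‖ := by gcongr
  calc ‖T (R g) - c • R g‖ = ‖(T (R g) - d • R g) + (d - c) • R g‖ := by
        rw [sub_smul]; abel_nf
    _ ≤ ‖g‖ + ‖c - d‖ * ‖R g‖ := by
        grw [norm_add_le, hdf, norm_neg, norm_smul, norm_sub_rev]
    _ < 3 * ‖c - d‖ * ‖R g‖ := by linarith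

theorem isApproxEigenvalue_of_mem_frontier {𝕜 E : Type*} [DenselyNormedField 𝕜]
    [NormedAddCommGroup E] [NormedSpace 𝕜 E] [CompleteSpace E] {T : E →L[𝕜] E} {c : 𝕜}
    (hc : c ∈ frontier (spectrum 𝕜 T)) : T.IsApproxEigenvalue c := by
  intro ε hε
  have hcσ : c ∈ spectrum 𝕜 T := (spectrum.isClosed T).frontier_subset hc
  have hcρ : c ∈ closure (resolventSet 𝕜 T) := by
    rw [← frontier_compl] at hc
    simpa [spectrum] using frontier_subset_closure hc
  obtain ⟨d, hd, hcd⟩ := Metric.mem_closure_iff.mp hcρ (ε / 3) (by positivity)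
  obtain ⟨f, hf⟩ := exists_norm_apply_sub_smul_lt hcσ hd
  refine ⟨f, hf.trans_le ?_⟩
  rw [dist_eq_norm] at hcd
  gcongr
  linarith

section PowMul

variable {𝕜 A : Type*} [NontriviallyNormedField 𝕜] [NormedRing A] [NormedAlgebra 𝕜 A]
  {T : A →L[𝕜] A} {c : 𝕜}

theorem norm_map_pow_sub_smul_pow_le (hT : ‖T‖ ≤ 1) (hmul : ∀ f g, T (f * g) = T f * T g)
    (hc : ‖c‖ ≤ 1) (f : A) {n : ℕ} (hn : 1 ≤ n) :
    ‖T (f ^ n) - c ^ n • f ^ n‖ ≤ n * ‖f‖ ^ (n - 1) * ‖T f - c • f‖ := by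
  induction n, hn using Nat.le_induction with
  | base => simp
  | succ k hk ih =>
    have hTk : ‖T (f ^ k)‖ ≤ ‖f‖ ^ k :=
      (le_opNorm_of_le T le_rfl).trans (by nlinarith [norm_pow_le' f hk, norm_nonneg (f ^ k)])
    have hcf : ‖c • f‖ ≤ ‖f‖ := (norm_smul_le c f).trans (mul_le_of_le_one_left (norm_nonneg f) hc)
    calc ‖T (f ^ (k + 1)) - c ^ (k + 1) • f ^ (k + 1)‖
        = ‖T (f ^ k) * (T f - c • f) + (T (f ^ k) - c ^ k • f ^ k) * (c • f)‖ := by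
          rw [pow_succ, pow_succ, hmul, ← smul_mul_smul, mul_sub, sub_mul]
          abel_nf
      _ ≤ ‖f‖ ^ k * ‖T f - c • f‖ + k * ‖f‖ ^ (k - 1) * ‖T f - c • f‖ * ‖f‖ := by
          grw [norm_add_le, norm_mul_le, norm_mul_le, hTk, ih, hcf]
      _ = (k + 1 : ℕ) * ‖f‖ ^ (k + 1 - 1) * ‖T f - c • f‖ := by
          rw [Nat.add_sub_cancel, ← pow_sub_one_mul (by omega : k ≠ 0)]
          push_cast
          ring

theorem IsApproxEigenvalue.pow (hT : ‖T‖ ≤ 1) (hmul : ∀ f g, T (f * g) = T f * T g)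
    (hnorm : IsPowMul (norm : A → ℝ)) (hc : ‖c‖ ≤ 1) (h : T.IsApproxEigenvalue c) {n : ℕ}
    (hn : 1 ≤ n) : T.IsApproxEigenvalue (c ^ n) := by
  intro ε hε
  have hn0 : (0 : ℝ) < n := by exact_mod_cast hn
  obtain ⟨f, hf⟩ := h (ε / n) (by positivity)
  have hf0 : 0 < ‖f‖ := pos_of_mul_pos_right ((norm_nonneg _).trans_lt hf) (by positivity)
  refine ⟨f ^ n, ?_⟩
  calc ‖T (f ^ n) - c ^ n • f ^ n‖ ≤ n * ‖f‖ ^ (n - 1) * ‖T f - c • f‖ :=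
        norm_map_pow_sub_smul_pow_le hT hmul hc f hn
    _ < n * ‖f‖ ^ (n - 1) * (ε / n * ‖f‖) := by gcongr
    _ = ε * ‖f ^ n‖ := by
        rw [hnorm f hn, ← pow_sub_one_mul (by omega : n ≠ 0)]
        field_simp

end PowMul

end ContinuousLinearMap

theorem BoundedContinuousFunction.isPowMul_norm {X R : Type*} [TopologicalSpace X]
    [NormedDivisionRing R] : IsPowMul (norm : (X →ᵇ R) → ℝ) := by
  intro f n hn
  refine le_antisymm (norm_pow_le' f hn) ?_
  have hn0 : n ≠ 0 := by omega
  set r := ‖f ^ n‖ ^ (n⁻¹ : ℝ)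
  have hr : r ^ n = ‖f ^ n‖ := Real.rpow_inv_natCast_pow (norm_nonneg _) hn0
  have hfr : ‖f‖ ≤ r := by
    refine (norm_le (by positivity)).mpr fun x ↦ le_of_pow_le_pow_left₀ hn0 (by positivity) ?_
    rw [hr, ← norm_pow, ← Pi.pow_apply, ← coe_pow]
    exact norm_coe_le_norm _ x
  exact hr ▸ pow_le_pow_left₀ (norm_nonneg f) hfr n

section Koopman

variable {X : Type*} [TopologicalSpace X] (φ : X → X) (hφ : Continuous φ)

theorem norm_cbKoopman_le : ‖cbKoopman φ hφ‖ ≤ 1 :=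
  LinearMap.mkContinuous_norm_le _ zero_le_one _

theorem cbKoopman_mul (f g : X →ᵇ ℂ) :
    cbKoopman φ hφ (f * g) = cbKoopman φ hφ f * cbKoopman φ hφ g :=
  rfl

theorem pow_mem_spectrum_cbKoopman {c : ℂ} (hc : c ∈ spectrum ℂ (cbKoopman φ hφ)) (hc1 : ‖c‖ = 1)
    {n : ℕ} (hn : 1 ≤ n) : c ^ n ∈ spectrum ℂ (cbKoopman φ hφ) := by
  have h1 : ‖(1 : (X →ᵇ ℂ) →L[ℂ] (X →ᵇ ℂ))‖ ≤ 1 := ContinuousLinearMap.norm_id_le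
  have hc0 : c ≠ 0 := by rintro rfl; simp at hc1
  have hT := norm_cbKoopman_le φ hφ
  have h2 : ‖cbKoopman φ hφ‖ * ‖(1 : (X →ᵇ ℂ) →L[ℂ] (X →ᵇ ℂ))‖ ≤ ‖c‖ := by
    rw [hc1]; exact mul_le_one₀ hT (norm_nonneg _) h1
  have hfr : c ∈ frontier (spectrum ℂ (cbKoopman φ hφ)) :=
    spectrum.mem_frontier_of_norm_mul_le (𝕜 := ℂ) (A := (X →ᵇ ℂ) →L[ℂ] (X →ᵇ ℂ)) hc hc0 h2
  have happrox := ContinuousLinearMap.isApproxEigenvalue_of_mem_frontier hfr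
  exact (happrox.pow hT (cbKoopman_mul φ hφ) isPowMul_norm hc1.le hn).mem_spectrum

end Koopman

theorem exists_nat_abs_mul_sub_le {α β : ℝ} (h : 0 < β / α) :
    ∃ n : ℕ, 1 ≤ n ∧ |n * α - β| ≤ |α| := by
  refine ⟨⌈β / α⌉₊, Nat.one_le_ceil_iff.mpr h, ?_⟩
  have hα : α ≠ 0 := by rintro rfl; simp at h
  have h1 := Nat.le_ceil (β / α)
  have h2 := Nat.ceil_lt_add_one h.le
  rw [show (⌈β / α⌉₊ : ℝ) * α - β = (⌈β / α⌉₊ - β / α) * α by field_simp, abs_mul]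
  exact mul_le_of_le_one_left (abs_nonneg _) (abs_le.mpr ⟨by linarith, by linarith⟩)

namespace Complex

open Real

theorem norm_exp_mul_I_sub_exp_mul_I_le (x y : ℝ) :
    ‖exp (x * I) - exp (y * I)‖ ≤ |x - y| := by
  have : exp (x * I) - exp (y * I) = exp (y * I) * (exp (I * (x - y : ℝ)) - 1) := by
    rw [mul_sub, mul_one, ← exp_add]
    push_cast
    ring_nf
  rw [this, norm_mul, norm_exp_ofReal_mul_I, one_mul]
  exact Real.norm_exp_I_mul_ofReal_sub_one_le

theorem exists_norm_exp_mul_I_pow_sub_le {α : ℝ} (hα : α ≠ 0) {z : ℂ} (hz : ‖z‖ = 1) :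
    ∃ n ≥ 1, ‖exp (α * I) ^ n - z‖ ≤ |α| := by
  have hshift (k : ℤ) : exp ((arg z + 2 * π * k : ℝ) * I) = z := by
    have harg := norm_mul_exp_arg_mul_I z
    rw [hz, ofReal_one, one_mul] at harg
    push_cast
    rw [add_mul, exp_add, harg, show 2 * π * k * I = k * (2 * π * I) by ring,
      exp_int_mul_two_pi_mul_I, mul_one]
  obtain ⟨β, hβ, hβα⟩ : ∃ β : ℝ, exp (β * I) = z ∧ 0 < β / α := by
    rcases hα.lt_or_gt with hneg | hpos
    · refine ⟨_, hshift (-1), div_pos_of_neg_of_neg ?_ hneg⟩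
      push_cast
      linarith [arg_le_pi z, pi_pos]
    · refine ⟨_, hshift 1, div_pos ?_ hpos⟩
      push_cast
      linarith [neg_pi_lt_arg z, pi_pos]
  obtain ⟨n, hn, hnβ⟩ := exists_nat_abs_mul_sub_le hβα
  refine ⟨n, hn, ?_⟩
  rw [← exp_nat_mul, ← hβ, ← mul_assoc, ← ofReal_natCast, ← ofReal_mul]
  exact (norm_exp_mul_I_sub_exp_mul_I_le _ _).trans hnβ

theorem exists_exp_mul_I_eq_pow {z : ℂ} (hz : ‖z‖ = 1) (hroot : ∀ n ≥ 1, z ^ n ≠ 1) {ε : ℝ}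
    (hε : 0 < ε) : ∃ n ≥ 1, ∃ α : ℝ, α ≠ 0 ∧ |α| < ε ∧ exp (α * I) = z ^ n := by
  obtain ⟨N, hN⟩ := exists_nat_gt (2 * π / ε)
  have hN0 : (0 : ℝ) < N := (by positivity : 0 < 2 * π / ε).trans hN
  obtain ⟨k, hk, -, hkξ⟩ :=
    Real.exists_nat_abs_mul_sub_round_le (arg z / (2 * π)) (by exact_mod_cast hN0)
  set j := round (k * (arg z / (2 * π)))
  have hexp : exp ((k * arg z - 2 * π * j : ℝ) * I) = z ^ k := by
    have harg := norm_mul_exp_arg_mul_I z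
    rw [hz, ofReal_one, one_mul] at harg
    push_cast
    rw [sub_mul, exp_sub, show 2 * π * j * I = j * (2 * π * I) by ring,
      exp_int_mul_two_pi_mul_I, div_one, mul_assoc, exp_nat_mul, harg]
  refine ⟨k, hk, _, fun h0 ↦ hroot k hk ?_, ?_, hexp⟩
  · rw [← hexp, h0, ofReal_zero, zero_mul, exp_zero]
  · have : k * arg z - 2 * π * j = 2 * π * (k * (arg z / (2 * π)) - j) := by
      field_simp
    rw [this, abs_mul, abs_of_pos (by positivity)]
    calc 2 * π * |k * (arg z / (2 * π)) - j| ≤ 2 * π * (1 / (N + 1)) := by gcongr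
      _ < 2 * π / N := by
        rw [mul_one_div]
        gcongr
        linarith
      _ < ε := by
        rw [div_lt_iff₀ hN0]
        rw [div_lt_iff₀ hε] at hN
        linarith

theorem exists_pow_eq_exp_two_pi_div_orderOf_mul_I {z : ℂ} (hz : IsOfFinOrder z) :
    ∃ n ≥ 1, exp ((2 * π / orderOf z : ℝ) * I) = z ^ n := by
  have hm : orderOf z ≠ 0 := hz.orderOf_pos.ne'
  have : NeZero (orderOf z) := ⟨hm⟩
  obtain ⟨i, -, hi⟩ := (IsPrimitiveRoot.orderOf z).eq_pow_of_pow_eq_one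
    (isPrimitiveRoot_exp (orderOf z) hm).pow_eq_one
  refine ⟨i + orderOf z, by omega, ?_⟩
  rw [pow_add, pow_orderOf_eq_one, mul_one, hi]
  push_cast
  ring_nf

end Complex

section PowerClosed

open Complex Real

variable {S : Set ℂ}

theorem sphere_subset_of_forall_exists_exp_mul_I_mem (hpow : ∀ z ∈ S, ∀ n ≥ 1, z ^ n ∈ S)
    (hcl : IsClosed S)
    (hsmall : ∀ ε > 0, ∃ α : ℝ, α ≠ 0 ∧ |α| < ε ∧ exp (α * I) ∈ S) :
    {z : ℂ | ‖z‖ = 1} ⊆ S := by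
  intro z hz
  rw [← hcl.closure_eq, Metric.mem_closure_iff]
  intro ε hε
  obtain ⟨α, hα, hαε, hαS⟩ := hsmall ε hε
  obtain ⟨n, hn, hnz⟩ := exists_norm_exp_mul_I_pow_sub_le hα hz
  exact ⟨_, hpow _ hαS n hn, by rw [dist_comm, dist_eq_norm]; linarith⟩

theorem finite_and_pow_eq_one_of_ne_sphere (hpow : ∀ z ∈ S, ∀ n ≥ 1, z ^ n ∈ S)
    (hS : S ⊆ {z : ℂ | ‖z‖ = 1}) (hcl : IsClosed S)
    (hne : S ≠ {z : ℂ | ‖z‖ = 1}) : S.Finite ∧ ∀ z ∈ S, ∃ n ≥ 1, z ^ n = 1 := by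
  have hgap : ¬ ∀ ε > 0, ∃ α : ℝ, α ≠ 0 ∧ |α| < ε ∧ exp (α * I) ∈ S := fun h ↦
    hne (hS.antisymm (sphere_subset_of_forall_exists_exp_mul_I_mem hpow hcl h))
  have hroots : ∀ z ∈ S, ∃ n ≥ 1, z ^ n = 1 := by
    intro z hz
    by_contra! h
    refine hgap fun ε hε ↦ ?_
    obtain ⟨n, hn, α, hα, hαε, hαz⟩ := exists_exp_mul_I_eq_pow (hS hz) h hε
    exact ⟨α, hα, hαε, hαz ▸ hpow z hz n hn⟩
  refine ⟨?_, hroots⟩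
  by_contra hinf
  refine hgap fun ε hε ↦ ?_
  obtain ⟨N, hN⟩ := exists_nat_gt (2 * π / ε)
  obtain ⟨z, hz, hzN⟩ : ∃ z ∈ S, z ^ N.factorial ≠ 1 := by
    by_contra! h
    refine hinf ((Polynomial.nthRootsFinset N.factorial (1 : ℂ)).finite_toSet.subset fun z hz ↦ ?_)
    exact (Polynomial.mem_nthRootsFinset N.factorial_pos 1).mpr (h z hz)
  have hfin : IsOfFinOrder z := isOfFinOrder_iff_pow_eq_one.mpr (hroots z hz)
  have hNm : N < orderOf z := by
    by_contra! hle
    exact hzN (orderOf_dvd_iff_pow_eq_one.mp (Nat.dvd_factorial hfin.orderOf_pos hle))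
  obtain ⟨n, hn, hzn⟩ := exists_pow_eq_exp_two_pi_div_orderOf_mul_I hfin
  have hm : (N : ℝ) < orderOf z := by exact_mod_cast hNm
  have hm0 : (0 : ℝ) < orderOf z := by exact_mod_cast hfin.orderOf_pos
  have hpos : 0 < 2 * π / orderOf z := by positivity
  refine ⟨2 * π / orderOf z, hpos.ne', ?_, hzn ▸ hpow z hz n hn⟩
  rw [abs_of_pos hpos, div_lt_iff₀ hm0]
  rw [div_lt_iff₀ hε] at hN
  nlinarith

end PowerClosed

/-- If the peripheral spectrum of the composition operator `T_φ` on `C_b(X, ℂ)` is a proper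
subset of the unit circle, then it is finite and consists of roots of unity. -/
theorem cb_peripheral_spectrum_finite_of_proper
    {X : Type*} [TopologicalSpace X] (φ : X → X) (hφ : Continuous φ)
    (h : spectrum ℂ (cbKoopman φ hφ) ∩ {z : ℂ | ‖z‖ = 1} ≠ {z : ℂ | ‖z‖ = 1}) :
    (spectrum ℂ (cbKoopman φ hφ) ∩ {z : ℂ | ‖z‖ = 1}).Finite ∧
      ∀ z ∈ spectrum ℂ (cbKoopman φ hφ) ∩ {z : ℂ | ‖z‖ = 1}, ∃ n ≥ 1, z ^ n = 1 := by
  have hclosed : IsClosed (spectrum ℂ (cbKoopman φ hφ) ∩ {z : ℂ | ‖z‖ = 1}) :=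
    (spectrum.isClosed (𝕜 := ℂ) (cbKoopman φ hφ)).inter
      (isClosed_eq continuous_norm continuous_const)
  refine finite_and_pow_eq_one_of_ne_sphere ?_ Set.inter_subset_right hclosed h
  rintro z ⟨hz, hz1 : ‖z‖ = 1⟩ n hn
  exact ⟨pow_mem_spectrum_cbKoopman φ hφ hz hz1 hn,
    show ‖z ^ n‖ = 1 by rw [norm_pow, hz1, one_pow]⟩
end
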